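/- Let o,x,y ∈ G and suppose p,q are geodesic paths in Γ(G,X⊔H) with p from o to x and q from o to y. If there exist vertices v ∈ p and w ∈ q such that d_{Y∪H}(o,v) ≥ R and d_{Y∪H}(v,w) ≤ K for some R,K ∈ ℕ, then the Gromov product satisfies (x,y)_o^{Y∪H} ≥ R − (K + 3M_X) − 2δ_Y. -/

import Mathlib

open scoped ENNReal

noncomputable section

namespace ArXiv

/-! ### Gromov products, hyperbolicity and the Gromov boundary,
for a general distance function -/

variable {α : Type*}

/-- The Gromov product of `x` and `y` at `o` with respect to the distance function `d`. -/
def gprod (d : α → α → ℝ) (x y o : α) : ℝ := (d x o + d y o - d x y) / 2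

/-- The four-point δ-hyperbolicity condition. -/
def HyperbolicWith (d : α → α → ℝ) (δ : ℝ) : Prop :=
  ∀ w x y z : α, min (gprod d x y w) (gprod d y z w) - δ ≤ gprod d x z w

/-- Gromov hyperbolicity of the distance function `d`. -/
def IsHyperbolic (d : α → α → ℝ) : Prop := ∃ δ : ℝ, 0 ≤ δ ∧ HyperbolicWith d δ

/-- A sequence converges to infinity: the Gromov products at some (equivalently, any)
basepoint tend to infinity. -/
def ConvInf (d : α → α → ℝ) (x : ℕ → α) : Prop :=
  ∀ o : α, ∀ R : ℝ, ∃ N : ℕ, ∀ i, N ≤ i → ∀ j, N ≤ j → R ≤ gprod d (x i) (x j) o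

/-- Sequences converging to infinity. -/
abbrev BSeq (d : α → α → ℝ) := {x : ℕ → α // ConvInf d x}

/-- The equivalence of sequences converging to infinity defining the Gromov boundary. -/
def BRel (d : α → α → ℝ) (x y : BSeq d) : Prop :=
  ∀ o : α, ∀ R : ℝ, ∃ N : ℕ, ∀ i, N ≤ i → ∀ j, N ≤ j → R ≤ gprod d (x.1 i) (y.1 j) o

/-- The (sequential) Gromov boundary of `(α, d)`. -/
abbrev Bdry (d : α → α → ℝ) := Quot (BRel d)

/-- The extension of the Gromov product at `o` to boundary points. -/
def bgp (d : α → α → ℝ) (o : α) (ξ η : Bdry d) : EReal :=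
  sSup {r : EReal | ∃ x y : BSeq d, Quot.mk (BRel d) x = ξ ∧ Quot.mk (BRel d) y = η ∧
    r = Filter.liminf
      (fun pq : ℕ × ℕ => ((gprod d (x.1 pq.1) (y.1 pq.2) o : ℝ) : EReal)) Filter.atTop}

/-- The canonical topology on the Gromov boundary, generated by the sets
`{η | (ξ,η)_o > n}`. -/
def bdryTop (d : α → α → ℝ) : TopologicalSpace (Bdry d) :=
  TopologicalSpace.generateFrom
    {U : Set (Bdry d) | ∃ (ξ : Bdry d) (o : α) (n : ℝ), U = {η | (n : EReal) < bgp d o ξ η}}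

/-! ### Relative Cayley graphs and hyperbolically embedded subgroups -/

variable {G : Type*} [Group G] {Λ : Type*}

/-- Labels of (positive) edges of the relative Cayley graph `Γ(G, X ⊔ H)`:
letters from `X` and letters from `H_λ \ {1}`, for each `λ`, with disjoint unions
taken as sets of labels. -/
inductive RelLab (X : Set G) (H : Λ → Subgroup G) : Type _
  | xlab (g : G) (hg : g ∈ X) : RelLab X H
  | hlab (l : Λ) (g : G) (hg : g ∈ H l) (hne : g ≠ 1) : RelLab X H

/-- The group element underlying a label. -/
def RelLab.val {X : Set G} {H : Λ → Subgroup G} : RelLab X H → G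
  | .xlab g _ => g
  | .hlab _ g _ _ => g

/-- The label is a letter of `H l`. -/
def RelLab.isH {X : Set G} {H : Λ → Subgroup G} (l : Λ) : RelLab X H → Prop
  | .xlab _ _ => False
  | .hlab l' _ _ _ => l' = l

/-- The value of a directed edge: an edge together with an orientation
(the Cayley graph being undirected, an edge may be traversed both ways). -/
def edgeVal {X : Set G} {H : Λ → Subgroup G} (e : RelLab X H × Bool) : G :=
  if e.2 then e.1.val else e.1.val⁻¹

/-- The `i`-th vertex of the edge path starting at `f` and reading the directed
edges of `L`. -/
def chainVert {X : Set G} {H : Λ → Subgroup G} (f : G) (L : List (RelLab X H × Bool))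
    (i : ℕ) : G :=
  f * ((L.take i).map edgeVal).prod

/-- The graph metric `d_{X∪H}` of the relative Cayley graph `Γ(G, X ⊔ H)`. -/
def rdist (X : Set G) (H : Λ → Subgroup G) (f g : G) : ℝ :=
  sInf {r : ℝ | ∃ L : List (RelLab X H × Bool),
    f * (L.map edgeVal).prod = g ∧ r = (L.length : ℝ)}

/-- Distance from a point to a set in `Γ(G, X ⊔ H)`. -/
def rdistPtSet (X : Set G) (H : Λ → Subgroup G) (f : G) (B : Set G) : ℝ :=
  sInf {r : ℝ | ∃ b ∈ B, r = rdist X H f b}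

/-- Distance between two sets in `Γ(G, X ⊔ H)`. -/
def rdistSets (X : Set G) (H : Λ → Subgroup G) (A B : Set G) : ℝ :=
  sInf {r : ℝ | ∃ a ∈ A, ∃ b ∈ B, r = rdist X H a b}

/-- The relative metric `d̂_λ`: the infimum of the lengths of paths in `Γ(G, X ⊔ H)`
from `f` to `g` containing no edge of the subgraph `Γ(H_λ, H_λ∖{1})`
(`∞` if there is no such path). -/
def hatd (X : Set G) (H : Λ → Subgroup G) (l : Λ) (f g : G) : ℝ≥0∞ :=
  sInf {r : ℝ≥0∞ | ∃ L : List (RelLab X H × Bool),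
    f * (L.map edgeVal).prod = g ∧
    (∀ i : ℕ, ∀ e ∈ L[i]?, ¬(chainVert f L i ∈ H l ∧ (Prod.fst e).isH l)) ∧
    r = (L.length : ℝ≥0∞)}

/-- `{H_λ}_{λ∈Λ}` is hyperbolically embedded in `(G, X)`:
`X ∪ ⋃ H_λ` generates `G`, the relative Cayley graph is hyperbolic, and each
relative metric `d̂_λ` is locally finite. -/
def HypEmb (X : Set G) (H : Λ → Subgroup G) : Prop :=
  Subgroup.closure (X ∪ ⋃ l : Λ, (H l : Set G)) = ⊤ ∧
  IsHyperbolic (rdist X H) ∧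
  ∀ (l : Λ) (n : ℕ), {h : G | h ∈ H l ∧ hatd X H l 1 h ≤ (n : ℝ≥0∞)}.Finite

/-- Paths (finite, when `len = n`, or infinite rays, when `len = ⊤`) in the relative
Cayley graph `Γ(G, X ⊔ H)`. -/
structure RPath (X : Set G) (H : Λ → Subgroup G) where
  len : ℕ∞
  vert : ℕ → G
  lab : ℕ → RelLab X H × Bool
  step : ∀ i : ℕ, (i : ℕ∞) < len → vert (i + 1) = vert i * edgeVal (lab i)

namespace RPath

variable {X : Set G} {H : Λ → Subgroup G}

/-- A path is geodesic. -/
def IsGeodesic (p : RPath X H) : Prop :=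
  ∀ i j : ℕ, i ≤ j → (j : ℕ∞) ≤ p.len →
    rdist X H (p.vert i) (p.vert j) = ((j - i : ℕ) : ℝ)

/-- A (necessarily finite) path goes from `f` to `g`. -/
def FromTo (p : RPath X H) (f g : G) : Prop :=
  p.vert 0 = f ∧ ∃ n : ℕ, p.len = (n : ℕ∞) ∧ p.vert n = g

/-- An infinite path. -/
def IsRay (p : RPath X H) : Prop := p.len = ⊤

/-- `q` is a subpath of `p`. -/
def IsSubpath (q p : RPath X H) : Prop :=
  ∃ a : ℕ, ((a : ℕ∞) + q.len ≤ p.len) ∧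
    (∀ k : ℕ, (k : ℕ∞) ≤ q.len → q.vert k = p.vert (a + k)) ∧
    (∀ k : ℕ, (k : ℕ∞) < q.len → q.lab k = p.lab (a + k))

/-- `p` penetrates the coset `B` of `H l` with entrance point `p.vert i` and exit point
`p.vert j`: the edges `i,…,j-1` form an `H l`-component of `p` starting in `B`. -/
def PenetratesAt (p : RPath X H) (l : Λ) (B : Set G) (i j : ℕ) : Prop :=
  i < j ∧ (j : ℕ∞) ≤ p.len ∧ p.vert i ∈ B ∧
  (∀ k : ℕ, i ≤ k → k < j → (p.lab k).1.isH l) ∧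
  (i = 0 ∨ ¬ (p.lab (i - 1)).1.isH l) ∧
  ((j : ℕ∞) = p.len ∨ ¬ (p.lab j).1.isH l)

/-- `p` penetrates the coset `B` of `H l`. -/
def Penetrates (p : RPath X H) (l : Λ) (B : Set G) : Prop :=
  ∃ i j : ℕ, p.PenetratesAt l B i j

/-- `p` essentially penetrates the coset `B` of `H l` (with parameter `D`). -/
def EssPenetrates (p : RPath X H) (l : Λ) (B : Set G) (Dc : ℝ) : Prop :=
  ∃ i j : ℕ, p.PenetratesAt l B i j ∧ ENNReal.ofReal Dc < hatd X H l (p.vert i) (p.vert j)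

end RPath

/-- `B` is a (left) coset of `H l`. -/
def Coset (H : Λ → Subgroup G) (l : Λ) (B : Set G) : Prop :=
  ∃ x : G, B = {g : G | x⁻¹ * g ∈ H l}

/-- The set `S(f,g;D)` of `(f,g;D)`-separating cosets: cosets (recorded together with
the index of their subgroup) essentially penetrated by some geodesic of `Γ(G,X⊔H)`
from `f` to `g`. -/
def Sep (X : Set G) (H : Λ → Subgroup G) (Dc : ℝ) (f g : G) : Set (Λ × Set G) :=
  {lB | Coset H lB.1 lB.2 ∧
    ∃ p : RPath X H, p.IsGeodesic ∧ p.FromTo f g ∧ p.EssPenetrates lB.1 lB.2 Dc}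

/-- The set `S(γ;D)` of separating cosets of a geodesic ray. -/
def SepRay (X : Set G) (H : Λ → Subgroup G) (Dc : ℝ) (p : RPath X H) : Set (Λ × Set G) :=
  ⋃ n : ℕ, Sep X H Dc (p.vert 0) (p.vert n)

/-- The set `Y = {y ∈ G | S(1,y;D) = ∅}`. -/
def Yset (X : Set G) (H : Λ → Subgroup G) (Dc : ℝ) : Set G := {y : G | Sep X H Dc 1 y = ∅}

/-- Geodesic polygons in the relative Cayley graph: a closed path of `n` edges,
subdivided into `m` geodesic sides. -/
structure RPolygon (X : Set G) (H : Λ → Subgroup G) where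
  n : ℕ
  m : ℕ
  vert : ℕ → G
  lab : ℕ → RelLab X H × Bool
  step : ∀ i : ℕ, i < n → vert (i + 1) = vert i * edgeVal (lab i)
  closed : vert n = vert 0
  corner : ℕ → ℕ
  corner_zero : corner 0 = 0
  corner_last : corner m = n
  corner_mono : ∀ t : ℕ, t < m → corner t ≤ corner (t + 1)
  sides_geodesic : ∀ t : ℕ, t < m → ∀ i j : ℕ, corner t ≤ i → i ≤ j → j ≤ corner (t + 1) →
    rdist X H (vert i) (vert j) = ((j - i : ℕ) : ℝ)

namespace RPolygon

variable {X : Set G} {H : Λ → Subgroup G}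

/-- An `H l`-component of the polygon, considered cyclically: the cyclic edges
`i,…,j-1` are all labelled in `H l`, maximally so. -/
def CompAt (p : RPolygon X H) (l : Λ) (i j : ℕ) : Prop :=
  i < j ∧ i < p.n ∧ j ≤ i + p.n ∧
  (∀ k : ℕ, i ≤ k → k < j → (p.lab (k % p.n)).1.isH l) ∧
  (j = i + p.n ∨
    (¬ (p.lab ((i + p.n - 1) % p.n)).1.isH l ∧ ¬ (p.lab (j % p.n)).1.isH l))

/-- An isolated `H l`-component of the polygon: one not connected to (i.e. lying in the
same `H l`-coset as) any other `H l`-component of the polygon. -/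
def IsolatedAt (p : RPolygon X H) (l : Λ) (i j : ℕ) : Prop :=
  p.CompAt l i j ∧ ∀ i' j' : ℕ, p.CompAt l i' j' → i' % p.n ≠ i % p.n →
    (p.vert (i % p.n))⁻¹ * p.vert (i' % p.n) ∉ H l

end RPolygon

/-- The property of the constant `C`: for every geodesic `m`-gon in `Γ(G,X⊔H)` and every
isolated `H_λ`-component `a` of it, `d̂_λ(a_-,a_+) ≤ mC`. -/
def CBound (X : Set G) (H : Λ → Subgroup G) (Cc : ℝ) : Prop :=
  ∀ (p : RPolygon X H) (l : Λ) (i j : ℕ), p.IsolatedAt l i j →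
    hatd X H l (p.vert (i % p.n)) (p.vert (j % p.n)) ≤ ENNReal.ofReal ((p.m : ℝ) * Cc)

/-- The vertex sequence of the path `γ` converges to infinity with respect to `d` and
its limit point in the boundary `Bdry d` is `ξ`. -/
def RLim {X : Set G} {H : Λ → Subgroup G} (d : G → G → ℝ) (γ : RPath X H)
    (ξ : Bdry d) : Prop :=
  ∃ h : ConvInf d γ.vert, Quot.mk (BRel d) ⟨γ.vert, h⟩ = ξ

end ArXiv

namespace ArXiv


section Helpers

variable {G : Type*} [Group G] {Λ : Type*} {S : Set G} {H : Λ → Subgroup G}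

theorem wprod_revflip (L : List (RelLab S H × Bool)) :
    (((L.map fun e => (e.1, !e.2)).reverse).map edgeVal).prod = ((L.map edgeVal).prod)⁻¹ := by
  induction L with
  | nil => simp
  | cons a L ih =>
    rw [List.map_cons, List.reverse_cons, List.map_append, List.prod_append,
        List.map_cons, List.prod_cons, ih, List.map_cons, List.prod_cons, mul_inv_rev]
    rcases a with ⟨a, b⟩
    cases b <;> simp [edgeVal]

/-- Connectivity in the relative Cayley graph. -/
def Conn (S : Set G) (H : Λ → Subgroup G) (f g : G) : Prop :=
  ∃ L : List (RelLab S H × Bool), f * (L.map edgeVal).prod = g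

theorem Conn.rfl (f : G) : Conn S H f f := ⟨[], by simp⟩

theorem Conn.symm {f g : G} (h : Conn S H f g) : Conn S H g f := by
  obtain ⟨L, hL⟩ := h
  refine ⟨(L.map fun e => (e.1, !e.2)).reverse, ?_⟩
  rw [wprod_revflip, ← hL]
  group

theorem Conn.trans {f g k : G} (h1 : Conn S H f g) (h2 : Conn S H g k) : Conn S H f k := by
  obtain ⟨L₁, h1⟩ := h1; obtain ⟨L₂, h2⟩ := h2
  exact ⟨L₁ ++ L₂, by rw [List.map_append, List.prod_append, ← mul_assoc, h1, h2]⟩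

theorem rdist_bddBelow (f g : G) : BddBelow {r : ℝ | ∃ L : List (RelLab S H × Bool),
    f * (L.map edgeVal).prod = g ∧ r = (L.length : ℝ)} :=
  ⟨0, by rintro r ⟨L, -, rfl⟩; positivity⟩

theorem rdist_nonneg (f g : G) : 0 ≤ rdist S H f g :=
  Real.sInf_nonneg (by rintro r ⟨L, -, rfl⟩; positivity)

theorem rdist_le {f g : G} (L : List (RelLab S H × Bool)) (hL : f * (L.map edgeVal).prod = g) :
    rdist S H f g ≤ (L.length : ℝ) :=
  csInf_le (rdist_bddBelow f g) ⟨L, hL, rfl⟩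

theorem rdist_self (f : G) : rdist S H f f = 0 :=
  le_antisymm (by simpa using rdist_le ([] : List (RelLab S H × Bool)) (by simp))
    (rdist_nonneg f f)

theorem rdist_symm (f g : G) : rdist S H f g = rdist S H g f := by
  unfold rdist
  congr 1
  ext r
  constructor
  · rintro ⟨L, hL, rfl⟩
    exact ⟨(L.map fun e => (e.1, !e.2)).reverse,
      by rw [wprod_revflip, ← hL]; group, by simp⟩
  · rintro ⟨L, hL, rfl⟩
    exact ⟨(L.map fun e => (e.1, !e.2)).reverse,
      by rw [wprod_revflip, ← hL]; group, by simp⟩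

theorem exists_min_word {f g : G} (h : Conn S H f g) :
    ∃ L : List (RelLab S H × Bool), f * (L.map edgeVal).prod = g ∧
      rdist S H f g = (L.length : ℝ) ∧
      ∀ L' : List (RelLab S H × Bool), f * (L'.map edgeVal).prod = g →
        L.length ≤ L'.length := by
  classical
  have hTne : {n : ℕ | ∃ L : List (RelLab S H × Bool),
      f * (L.map edgeVal).prod = g ∧ L.length = n}.Nonempty := by
    obtain ⟨L, hL⟩ := h; exact ⟨L.length, L, hL, rfl⟩
  obtain ⟨L, hL, hlen⟩ := Nat.sInf_mem hTne
  refine ⟨L, hL, le_antisymm (rdist_le L hL) ?_, ?_⟩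
  · refine le_csInf ⟨(L.length : ℝ), L, hL, rfl⟩ ?_
    rintro r ⟨L', hL', rfl⟩
    have : L.length ≤ L'.length := hlen ▸ Nat.sInf_le ⟨L', hL', rfl⟩
    exact_mod_cast this
  · intro L' hL'
    exact hlen ▸ Nat.sInf_le ⟨L', hL', rfl⟩

theorem rdist_triangle {f g k : G} (h1 : Conn S H f g) (h2 : Conn S H g k) :
    rdist S H f k ≤ rdist S H f g + rdist S H g k := by
  obtain ⟨L₁, hL₁, e1, -⟩ := exists_min_word h1
  obtain ⟨L₂, hL₂, e2, -⟩ := exists_min_word h2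
  have h3 := rdist_le (f := f) (g := k) (L₁ ++ L₂)
    (by rw [List.map_append, List.prod_append, ← mul_assoc, hL₁, hL₂])
  rw [e1, e2]
  rw [List.length_append] at h3
  push_cast at h3
  linarith

theorem rpath_conn (p : RPath S H) (k : ℕ) (hk : (k : ℕ∞) ≤ p.len) :
    p.vert k = p.vert 0 * (((List.range k).map p.lab).map edgeVal).prod := by
  induction k with
  | zero => simp
  | succ n ih =>
    have hn : (n : ℕ∞) < p.len :=
      lt_of_lt_of_le (by exact_mod_cast Nat.lt_succ_self n) hk
    rw [p.step n hn, ih (le_of_lt hn), List.range_succ]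
    simp [mul_assoc]

theorem rdist_of_empty (hne : IsEmpty (RelLab S H)) (a b : G) : rdist S H a b = 0 := by
  unfold rdist
  have hsub : {r : ℝ | ∃ L : List (RelLab S H × Bool),
      a * (L.map edgeVal).prod = b ∧ r = (L.length : ℝ)} ⊆ {0} := by
    rintro r ⟨L, hL, rfl⟩
    cases L with
    | nil => simp
    | cons e _ => exact (hne.false e.1).elim
  rcases Set.subset_singleton_iff_eq.mp hsub with h | h
  · rw [h]; exact Real.sInf_empty
  · rw [h]; exact csInf_singleton 0

theorem exists_geodesic [ne : Nonempty (RelLab S H)] {f g : G} (h : Conn S H f g) :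
    ∃ β : RPath S H, β.IsGeodesic ∧ β.FromTo f g := by
  classical
  obtain ⟨L, hL, hdist, hmin⟩ := exists_min_word h
  refine ⟨⟨(L.length : ℕ∞), fun i => f * ((L.take i).map edgeVal).prod,
      fun i => L.getD i (Classical.arbitrary _, true), ?_⟩, ?_, ?_⟩
  · intro i hi
    have hi' : i < L.length := by exact_mod_cast hi
    rw [List.map_take, List.map_take,
      List.prod_take_succ _ i (by simpa using hi'), List.getElem_map,
      List.getD_eq_getElem L _ hi', mul_assoc]
  · intro i j hij hjlen
    simp only at hjlen ⊢
    have hj : j ≤ L.length := by exact_mod_cast hjlen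
    have hkey : (f * ((L.take i).map edgeVal).prod) *
        ((((L.drop i).take (j - i)).map edgeVal).prod) =
        f * ((L.take j).map edgeVal).prod := by
      have : L.take j = L.take i ++ (L.drop i).take (j - i) := by
        rw [← List.take_add]
        congr 1
        omega
      rw [this, List.map_append, List.prod_append, mul_assoc]
    have hmlen : ((L.drop i).take (j - i)).length = j - i := by
      rw [List.length_take, List.length_drop]
      omega
    have hup : rdist S H (f * ((L.take i).map edgeVal).prod)
        (f * ((L.take j).map edgeVal).prod) ≤ ((j - i : ℕ) : ℝ) := by
      have := rdist_le _ hkey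
      rwa [hmlen] at this
    obtain ⟨M0, hM0, hd0, -⟩ := exists_min_word (f := f * ((L.take i).map edgeVal).prod)
      (g := f * ((L.take j).map edgeVal).prod) ⟨_, hkey⟩
    have hsplice : f * (((L.take i ++ M0 ++ L.drop j).map edgeVal).prod) = g := by
      rw [List.map_append, List.prod_append, List.map_append, List.prod_append]
      rw [← mul_assoc, ← mul_assoc, hM0]
      rw [mul_assoc, ← List.prod_append, ← List.map_append, List.take_append_drop, hL]
    have hlow := hmin _ hsplice
    rw [List.length_append, List.length_append, List.length_take, List.length_drop] at hlow
    have hMlen : j - i ≤ M0.length := by omega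
    have hMle : (M0.length : ℝ) ≤ ((j - i : ℕ) : ℝ) := hd0 ▸ hup
    have : M0.length = j - i := le_antisymm (by exact_mod_cast hMle) hMlen
    rw [hd0, this]
  · refine ⟨by simp, L.length, rfl, ?_⟩
    simp only [List.take_length]
    exact hL

theorem letter_transfer (X : Set G) (H : Λ → Subgroup G) (Dc : ℝ) (e : RelLab X H) :
    ∃ e' : RelLab (Yset X H Dc) H, e'.val = e.val := by
  classical
  cases e with
  | hlab l g hg hne => exact ⟨.hlab l g hg hne, rfl⟩
  | xlab g hgX =>
    by_cases hY : Sep X H Dc 1 g = ∅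
    · exact ⟨.xlab g hY, rfl⟩
    · obtain ⟨⟨l, B⟩, hmem⟩ := Set.nonempty_iff_ne_empty.2 hY
      obtain ⟨-, p', hgeo, hft, i, j, hpen, -⟩ := hmem
      obtain ⟨hv0, n, hlen, hvn⟩ := hft
      obtain ⟨hij, hjle, -, hlabs, -, -⟩ := hpen
      have hd : rdist X H 1 g = ((n - 0 : ℕ) : ℝ) := by
        have := hgeo 0 n (Nat.zero_le n) (le_of_eq hlen.symm)
        rwa [hv0, hvn] at this
      have hle1 : rdist X H 1 g ≤ 1 := by
        have := rdist_le (f := (1 : G)) (g := g) [((RelLab.xlab g hgX : RelLab X H), true)]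
          (by simp [edgeVal, RelLab.val])
        simpa using this
      have hn1 : n ≤ 1 := by
        rw [hd] at hle1
        exact_mod_cast (by simpa using hle1 : ((n : ℝ)) ≤ 1)
      have hjn : j ≤ n := by rw [hlen] at hjle; exact_mod_cast hjle
      have hi0 : i = 0 := by omega
      have hn : n = 1 := by omega
      have hstep := p'.step 0 (by rw [hlen, hn]; exact_mod_cast Nat.zero_lt_one)
      have hgv : g = edgeVal (p'.lab 0) := by
        have : p'.vert 1 = g := by rw [← hn, hvn]
        rw [← this, hstep, hv0, one_mul]
      have hlab0 : (p'.lab 0).1.isH l := hlabs 0 (by omega) (by omega)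
      rcases he0 : (p'.lab 0).1 with ⟨g', hg'x⟩ | ⟨l', g', hg'm, hne'⟩
      · rw [he0] at hlab0; exact absurd hlab0 (by simp [RelLab.isH])
      · rw [he0] at hlab0
        have hl : l' = l := hlab0
        subst hl
        have hval : (p'.lab 0).1.val = g' := by rw [he0]; rfl
        have hgH : g ∈ H l' ∧ g ≠ 1 := by
          rcases hb : (p'.lab 0).2 with _ | _
          · rw [hgv]
            unfold edgeVal
            rw [hb, hval]
            simp only [Bool.false_eq_true, if_false]
            exact ⟨inv_mem hg'm, inv_ne_one.mpr hne'⟩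
          · rw [hgv]
            unfold edgeVal
            rw [hb, hval]
            simp only [if_true]
            exact ⟨hg'm, hne'⟩
        exact ⟨.hlab l' g hgH.1 hgH.2, rfl⟩

theorem conn_transfer_aux (X : Set G) (H : Λ → Subgroup G) (Dc : ℝ)
    (L : List (RelLab X H × Bool)) :
    ∃ L' : List (RelLab (Yset X H Dc) H × Bool),
      (L'.map edgeVal).prod = (L.map edgeVal).prod := by
  induction L with
  | nil => exact ⟨[], rfl⟩
  | cons e L ih =>
    obtain ⟨e', he'⟩ := letter_transfer X H Dc e.1
    obtain ⟨L', hL'⟩ := ih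
    refine ⟨(e', e.2) :: L', ?_⟩
    have hev : edgeVal (e', e.2) = edgeVal e := by
      rcases e with ⟨e1, b⟩
      cases b <;> simp [edgeVal, he']
    simp only [List.map_cons, List.prod_cons, hev, hL']

theorem conn_transfer {X : Set G} {H : Λ → Subgroup G} (Dc : ℝ) {a b : G}
    (h : Conn X H a b) : Conn (Yset X H Dc) H a b := by
  obtain ⟨L, hL⟩ := h
  obtain ⟨L', hL'⟩ := conn_transfer_aux X H Dc L
  exact ⟨L', by rw [hL', hL]⟩

end Helpers

/-- Lemma 3.12: a lower bound on the Gromov product in `Γ(G,Y⊔H)` from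
close-by vertices of geodesics of `Γ(G,X⊔H)`. -/
theorem statement10 {G Λ : Type*} [Group G] (X : Set G) (H : Λ → Subgroup G)
    (hemb : HypEmb X H) (Cc : ℝ) (hC : 0 < Cc) (hCB : CBound X H Cc)
    (Dc : ℝ) (hD : 3 * Cc ≤ Dc)
    (δY : ℕ) (hδ : HyperbolicWith (rdist (Yset X H Dc) H) (δY : ℝ))
    (M : ℕ)
    (hM : ∀ (x y : G) (α : RPath X H) (β : RPath (Yset X H Dc) H),
      α.IsGeodesic → α.FromTo x y → β.IsGeodesic → β.FromTo x y →
      ((∀ i : ℕ, (i : ℕ∞) ≤ α.len →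
          ∃ j : ℕ, (j : ℕ∞) ≤ β.len ∧
            rdist (Yset X H Dc) H (α.vert i) (β.vert j) ≤ (M : ℝ)) ∧
       (∀ j : ℕ, (j : ℕ∞) ≤ β.len →
          ∃ i : ℕ, (i : ℕ∞) ≤ α.len ∧
            rdist (Yset X H Dc) H (α.vert i) (β.vert j) ≤ (M : ℝ))))
    (o x y : G) (p q : RPath X H) (hp : p.IsGeodesic) (hq : q.IsGeodesic)
    (hpf : p.FromTo o x) (hqf : q.FromTo o y)
    (R K : ℕ) (iv jw : ℕ) (hiv : (iv : ℕ∞) ≤ p.len) (hjw : (jw : ℕ∞) ≤ q.len)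
    (h1 : (R : ℝ) ≤ rdist (Yset X H Dc) H o (p.vert iv))
    (h2 : rdist (Yset X H Dc) H (p.vert iv) (q.vert jw) ≤ (K : ℝ)) :
    (R : ℝ) - ((K : ℝ) + 3 * (M : ℝ)) - 2 * (δY : ℝ) ≤
      gprod (rdist (Yset X H Dc) H) x y o := by
  classical
  set Y := Yset X H Dc with hYdef
  set d := rdist Y H with hd
  by_cases hne : Nonempty (RelLab Y H)
  swap
  · -- degenerate case: no letters at all, `d ≡ 0`
    have hz : ∀ a b : G, d a b = 0 := fun a b =>
      rdist_of_empty (not_nonempty_iff.mp hne) a b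
    have hR0 : (R : ℝ) ≤ 0 := by rw [hz] at h1; exact h1
    have hK0 : (0 : ℝ) ≤ (K : ℝ) := Nat.cast_nonneg K
    have hM0 : (0 : ℝ) ≤ (M : ℝ) := Nat.cast_nonneg M
    have hδ0 : (0 : ℝ) ≤ (δY : ℝ) := Nat.cast_nonneg δY
    have hg : gprod d x y o = 0 := by simp [gprod, hz]
    rw [hg]
    linarith
  · haveI := hne
    have hK0 : (0 : ℝ) ≤ (K : ℝ) := Nat.cast_nonneg K
    have hM0 : (0 : ℝ) ≤ (M : ℝ) := Nat.cast_nonneg M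
    have hδ0 : (0 : ℝ) ≤ (δY : ℝ) := Nat.cast_nonneg δY
    have dsymm : ∀ a b : G, d a b = d b a := fun a b => rdist_symm a b
    have dtri : ∀ a b c : G, Conn Y H a b → Conn Y H b c → d a c ≤ d a b + d b c :=
      fun a b c hab hbc => rdist_triangle hab hbc
    set v := p.vert iv with hv
    set w := q.vert jw with hw
    obtain ⟨hp0, np, hplen, hpx⟩ := hpf
    obtain ⟨hq0, nq, hqlen, hqy⟩ := hqf
    -- connectivity of all points to `o` in the Y-graph
    have cov : Conn Y H o v := by
      have h' := rpath_conn p iv hiv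
      rw [hp0] at h'
      exact conn_transfer Dc ⟨_, h'.symm⟩
    have cox : Conn Y H o x := by
      have h' := rpath_conn p np (le_of_eq hplen.symm)
      rw [hp0, hpx] at h'
      exact conn_transfer Dc ⟨_, h'.symm⟩
    have cow : Conn Y H o w := by
      have h' := rpath_conn q jw hjw
      rw [hq0] at h'
      exact conn_transfer Dc ⟨_, h'.symm⟩
    have coy : Conn Y H o y := by
      have h' := rpath_conn q nq (le_of_eq hqlen.symm)
      rw [hq0, hqy] at h'
      exact conn_transfer Dc ⟨_, h'.symm⟩
    -- geodesics in the Y-graph from o to x and from o to y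
    obtain ⟨β, hβg, hβf⟩ := exists_geodesic cox
    obtain ⟨β', hβ'g, hβ'f⟩ := exists_geodesic coy
    obtain ⟨jv, hjv, hdvv'⟩ := (hM o x p β hp ⟨hp0, np, hplen, hpx⟩ hβg hβf).1 iv hiv
    obtain ⟨jw', hjw', hdww'⟩ := (hM o y q β' hq ⟨hq0, nq, hqlen, hqy⟩ hβ'g hβ'f).1 jw hjw
    set v' := β.vert jv with hv'
    set w' := β'.vert jw' with hw'
    obtain ⟨hb0, nb, hblen, hbx⟩ := hβf
    obtain ⟨hb0', nb', hblen', hby⟩ := hβ'f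
    have cov' : Conn Y H o v' := by
      have h' := rpath_conn β jv hjv
      rw [hb0] at h'
      exact ⟨_, h'.symm⟩
    have cow' : Conn Y H o w' := by
      have h' := rpath_conn β' jw' hjw'
      rw [hb0'] at h'
      exact ⟨_, h'.symm⟩
    -- geodesic identities
    have hjvnb : jv ≤ nb := by rw [hblen] at hjv; exact_mod_cast hjv
    have hjwnb : jw' ≤ nb' := by rw [hblen'] at hjw'; exact_mod_cast hjw'
    have e1 : d o v' = (jv : ℝ) := by
      have h' := hβg 0 jv (Nat.zero_le _) hjv
      rw [hb0] at h'
      simpa using h'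
    have e2 : d v' x = (nb : ℝ) - (jv : ℝ) := by
      have h' := hβg jv nb hjvnb (le_of_eq hblen.symm)
      rw [hbx] at h'
      have h'' : d v' x = ((nb - jv : ℕ) : ℝ) := h'
      rw [h'', Nat.cast_sub hjvnb]
    have e3 : d o x = (nb : ℝ) := by
      have h' := hβg 0 nb (Nat.zero_le _) (le_of_eq hblen.symm)
      rw [hb0, hbx] at h'
      simpa using h'
    have f1 : d o w' = (jw' : ℝ) := by
      have h' := hβ'g 0 jw' (Nat.zero_le _) hjw'
      rw [hb0'] at h'
      simpa using h'
    have f2 : d w' y = (nb' : ℝ) - (jw' : ℝ) := by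
      have h' := hβ'g jw' nb' hjwnb (le_of_eq hblen'.symm)
      rw [hby] at h'
      have h'' : d w' y = ((nb' - jw' : ℕ) : ℝ) := h'
      rw [h'', Nat.cast_sub hjwnb]
    have f3 : d o y = (nb' : ℝ) := by
      have h' := hβ'g 0 nb' (Nat.zero_le _) (le_of_eq hblen'.symm)
      rw [hb0', hby] at h'
      simpa using h'
    -- symmetrized distances
    have sxo : d x o = d o x := dsymm x o
    have svo : d v o = d o v := dsymm v o
    have sv'o : d v' o = d o v' := dsymm v' o
    have swo : d w o = d o w := dsymm w o
    have sw'o : d w' o = d o w' := dsymm w' o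
    have syo : d y o = d o y := dsymm y o
    have sxv' : d x v' = d v' x := dsymm x v'
    have syw' : d y w' = d w' y := dsymm y w'
    have sv'v : d v' v = d v v' := dsymm v' v
    have sw'w : d w' w = d w w' := dsymm w' w
    have swv : d w v = d v w := dsymm w v
    -- triangle inequalities among the relevant points
    have t1 : d o v ≤ d o v' + d v' v := dtri o v' v cov' (cov'.symm.trans cov)
    have ta : d v' o ≤ d v' v + d v o := dtri v' v o (cov'.symm.trans cov) cov.symm
    have tb : d x v ≤ d x v' + d v' v :=
      dtri x v' v (cox.symm.trans cov') (cov'.symm.trans cov)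
    have t3 : d o v ≤ d o w + d w v := dtri o w v cow (cow.symm.trans cov)
    have t4 : d o w ≤ d o w' + d w' w := dtri o w' w cow' (cow'.symm.trans cow)
    have tc : d w' o ≤ d w' w + d w o := dtri w' w o (cow'.symm.trans cow) cow.symm
    have td : d y w ≤ d y w' + d w' w :=
      dtri y w' w (coy.symm.trans cow') (cow'.symm.trans cow)
    -- Gromov product expansions
    have gxv_eq : gprod d x v o = (d x o + d v o - d x v) / 2 := rfl
    have gyw_eq : gprod d y w o = (d y o + d w o - d y w) / 2 := rfl
    have gvw_eq : gprod d v w o = (d v o + d w o - d v w) / 2 := rfl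
    have gcomm : ∀ a b : G, gprod d a b o = gprod d b a o := fun a b => by
      simp only [gprod]
      rw [dsymm a b]
      ring
    -- key lower bounds
    have gxv_ge : (R : ℝ) - 2 * (M : ℝ) ≤ gprod d x v o := by
      rw [gxv_eq]
      linarith
    have gyw_ge : (R : ℝ) - (K : ℝ) - 2 * (M : ℝ) ≤ gprod d y w o := by
      rw [gyw_eq]
      linarith
    have gvw_ge : (R : ℝ) - (K : ℝ) ≤ gprod d v w o := by
      rw [gvw_eq]
      linarith
    have gwy_ge : (R : ℝ) - (K : ℝ) - 2 * (M : ℝ) ≤ gprod d w y o := by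
      rw [gcomm w y]
      exact gyw_ge
    have hyp1 := hδ o v w y
    have hmin1 : (R : ℝ) - (K : ℝ) - 2 * (M : ℝ) ≤
        min (gprod d v w o) (gprod d w y o) :=
      le_min (by linarith) gwy_ge
    have gvy_ge : (R : ℝ) - (K : ℝ) - 2 * (M : ℝ) - (δY : ℝ) ≤ gprod d v y o := by
      linarith
    have hyp2 := hδ o x v y
    have hmin2 : (R : ℝ) - (K : ℝ) - 2 * (M : ℝ) - (δY : ℝ) ≤
        min (gprod d x v o) (gprod d v y o) :=
      le_min (by linarith) gvy_ge
    linarith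

end ArXiv
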